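/- Let σ(r) = r/‖r‖² denote the inversion at the unit sphere in ℝ³ and let û(r) = ‖r‖^{−1} u(σ(r)) denote the Kelvin transform of a function u. Then for all m ∈ ℤ and n ∈ ℕ₀, the Kelvin transform of the internal bi-cyclide harmonic of the first kind satisfies Ĝ_{m,n}(r) = (−1)^n G_{m,n}(r) for all r in the domain of G_{m,n} with σ(r) also in that domain. -/

import Mathlib

noncomputable section

open Complex Set Filter Topology MeasureTheory

/-- The complementary modulus `k' = √(1 - k²)`. -/
def complMod (k : ℝ) : ℝ := Real.sqrt (1 - k ^ 2)

/-- Data for the Jacobian elliptic functions `sn`, `cn`, `dn` (first argument the modulus `k`)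
together with the complete elliptic integral of the first kind `K`.  The functions are
characterized by the first order ODE system `sn' = cn·dn`, `cn' = -sn·dn`, `dn' = -k² sn·cn`
with initial values `sn 0 = 0`, `cn 0 = dn 0 = 1` (valid on the pole-free strip
`|Im z| < K(k')`), they are real on the real axis, and `K k` is the smallest positive
zero of `cn(·,k)`. -/
structure JacobiData where
  sn : ℝ → ℂ → ℂ
  cn : ℝ → ℂ → ℂ
  dn : ℝ → ℂ → ℂ
  K : ℝ → ℝ
  K_pos : ∀ k : ℝ, 0 < k → k < 1 → 0 < K k
  sn_zero : ∀ k : ℝ, sn k 0 = 0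
  cn_zero : ∀ k : ℝ, cn k 0 = 1
  dn_zero : ∀ k : ℝ, dn k 0 = 1
  sn_hasDerivAt : ∀ k : ℝ, 0 < k → k < 1 → ∀ z : ℂ, |z.im| < K (complMod k) →
    HasDerivAt (sn k) (cn k z * dn k z) z
  cn_hasDerivAt : ∀ k : ℝ, 0 < k → k < 1 → ∀ z : ℂ, |z.im| < K (complMod k) →
    HasDerivAt (cn k) (-(sn k z) * dn k z) z
  dn_hasDerivAt : ∀ k : ℝ, 0 < k → k < 1 → ∀ z : ℂ, |z.im| < K (complMod k) →
    HasDerivAt (dn k) (-(k : ℂ) ^ 2 * sn k z * cn k z) z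
  sn_real : ∀ k : ℝ, 0 < k → k < 1 → ∀ x : ℝ, (sn k (x : ℂ)).im = 0
  cn_real : ∀ k : ℝ, 0 < k → k < 1 → ∀ x : ℝ, (cn k (x : ℂ)).im = 0
  dn_real : ∀ k : ℝ, 0 < k → k < 1 → ∀ x : ℝ, (dn k (x : ℂ)).im = 0
  cn_K : ∀ k : ℝ, 0 < k → k < 1 → cn k ((K k : ℝ) : ℂ) = 0
  cn_pos : ∀ k : ℝ, 0 < k → k < 1 → ∀ x : ℝ, 0 ≤ x → x < K k → 0 < (cn k (x : ℂ)).re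

namespace JacobiData

variable (J : JacobiData)

/-- `K' = K(k')`, the complementary complete elliptic integral. -/
def Kc (k : ℝ) : ℝ := J.K (complMod k)

/-- `sn(x, k)` for real `x`, as a real number. -/
def snr (k x : ℝ) : ℝ := (J.sn k (x : ℂ)).re

/-- `cn(x, k)` for real `x`, as a real number. -/
def cnr (k x : ℝ) : ℝ := (J.cn k (x : ℂ)).re

/-- `dn(x, k)` for real `x`, as a real number. -/
def dnr (k x : ℝ) : ℝ := (J.dn k (x : ℂ)).re

/-- Glaisher's `sc = sn/cn` (real argument). -/
def scr (k x : ℝ) : ℝ := J.snr k x / J.cnr k x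

/-- Glaisher's `dc = dn/cn` (real argument). -/
def dcr (k x : ℝ) : ℝ := J.dnr k x / J.cnr k x

/-- Glaisher's `nc = 1/cn` (real argument). -/
def ncr (k x : ℝ) : ℝ := (J.cnr k x)⁻¹

/-- The cylindrical coordinate `R` of the point with bi-cyclide coordinates `(s,t)`:
`R = cn(s,k) cn(t,k') / (1 - sn(s,k) dn(t,k'))`. -/
def RR (k s t : ℝ) : ℝ :=
  J.cnr k s * J.cnr (complMod k) t / (1 - J.snr k s * J.dnr (complMod k) t)

/-- The coordinate `z` of the point with bi-cyclide coordinates `(s,t)`: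
`z = dn(s,k) sn(t,k') / (1 - sn(s,k) dn(t,k'))`. -/
def ZZ (k s t : ℝ) : ℝ :=
  J.dnr k s * J.snr (complMod k) t / (1 - J.snr k s * J.dnr (complMod k) t)

end JacobiData

/-- Three-dimensional Euclidean space. -/
abbrev E3 : Type := EuclideanSpace ℝ (Fin 3)

/-- The `z`-axis in `ℝ³`. -/
def zAxis : Set E3 := {p : E3 | p 0 = 0 ∧ p 1 = 0}

/-- The point of `ℝ³` with bi-cyclide coordinates `(s, t, φ)`. -/
def JacobiData.pt (J : JacobiData) (k s t φ : ℝ) : E3 :=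
  (WithLp.equiv 2 (Fin 3 → ℝ)).symm
    ![J.RR k s t * Real.cos φ, J.RR k s t * Real.sin φ, J.ZZ k s t]

/-- `(s, t, φ)` are bi-cyclide coordinates (with modulus `k`) of the point `p ∈ ℝ³`. -/
def JacobiData.IsBicyclide (J : JacobiData) (k : ℝ) (p : E3) (s t φ : ℝ) : Prop :=
  s ∈ Set.Ioo (-J.K k) (J.K k) ∧ t ∈ Set.Ioo (-J.Kc k) (J.Kc k) ∧
    φ ∈ Set.Ioc (-Real.pi) Real.pi ∧
    p 0 = J.RR k s t * Real.cos φ ∧ p 1 = J.RR k s t * Real.sin φ ∧ p 2 = J.ZZ k s t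

/-- The Laplacian of a function on `ℝ³` (sum of the second partial derivatives). -/
def lap {F : Type*} [NormedAddCommGroup F] [NormedSpace ℝ F] (u : E3 → F) (p : E3) : F :=
  ∑ i : Fin 3,
    fderiv ℝ (fun q : E3 => fderiv ℝ u q (EuclideanSpace.single i (1 : ℝ))) p
      (EuclideanSpace.single i (1 : ℝ))

/-- `u` is harmonic on the set `U ⊆ ℝ³`: it is twice continuously differentiable
and satisfies Laplace's equation there. -/
def HarmonicOnSet {F : Type*} [NormedAddCommGroup F] [NormedSpace ℝ F]
    (u : E3 → F) (U : Set E3) : Prop :=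
  ContDiffOn ℝ 2 u U ∧ ∀ p ∈ U, lap u p = 0

/-- The strip `|Im z| < 2K'` minus the branch cuts `(-∞, -K]` and `[K, ∞)`;
the natural domain of analyticity of the Lamé–Wangerin functions with modulus `k`. -/
def JacobiData.lwDomain (J : JacobiData) (k : ℝ) : Set ℂ :=
  {z : ℂ | |z.im| < 2 * J.Kc k ∧ (z.im ≠ 0 ∨ |z.re| < J.K k)}

/-- Data for the Lamé–Wangerin functions `W_ν^n(·,k)` (first argument the modulus `k`,
then the degree `ν ≥ -1/2` and the index `n ∈ ℕ`), together with their derivatives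
`Wd` and the eigenvalues `lam = Λ_ν^n(k)`.  `W_ν^n(·,k)` is the (real valued on `(-K,K)`,
`L²(-K,K)`-normalized) eigenfunction with exactly `n` zeros in `(-K,K)` of
`W'' + (Λ - ν(ν+1) dc²(s,k)) W = 0` belonging to the exponent `ν+1` at both
regular singular endpoints `±K`; it is analytic on the strip `|Im s| < 2K'` minus
the branch cuts `(-∞,-K]`, `[K,∞)`, and satisfies `W(-s) = (-1)^n W(s)`. -/
structure LameWangerin (J : JacobiData) where
  W : ℝ → ℝ → ℕ → ℂ → ℂ
  Wd : ℝ → ℝ → ℕ → ℂ → ℂ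
  lam : ℝ → ℝ → ℕ → ℝ
  hasDerivAt_W : ∀ k : ℝ, 0 < k → k < 1 → ∀ ν : ℝ, -(1/2) ≤ ν → ∀ n : ℕ,
    ∀ z ∈ J.lwDomain k, HasDerivAt (W k ν n) (Wd k ν n z) z
  hasDerivAt_Wd : ∀ k : ℝ, 0 < k → k < 1 → ∀ ν : ℝ, -(1/2) ≤ ν → ∀ n : ℕ,
    ∀ z ∈ J.lwDomain k, HasDerivAt (Wd k ν n)
      (-((lam k ν n : ℂ) - (ν : ℂ) * ((ν : ℂ) + 1) * (J.dn k z / J.cn k z) ^ 2) * W k ν n z) z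
  real_W : ∀ k : ℝ, 0 < k → k < 1 → ∀ ν : ℝ, -(1/2) ≤ ν → ∀ n : ℕ, ∀ x : ℝ,
    -J.K k < x → x < J.K k → (W k ν n (x : ℂ)).im = 0
  normalized : ∀ k : ℝ, 0 < k → k < 1 → ∀ ν : ℝ, -(1/2) ≤ ν → ∀ n : ℕ,
    ∫ x in (-J.K k)..(J.K k), ‖W k ν n (x : ℂ)‖ ^ 2 = 1
  zeros_finite : ∀ k : ℝ, 0 < k → k < 1 → ∀ ν : ℝ, -(1/2) ≤ ν → ∀ n : ℕ,
    Set.Finite {x : ℝ | x ∈ Set.Ioo (-J.K k) (J.K k) ∧ W k ν n (x : ℂ) = 0}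
  card_zeros : ∀ k : ℝ, 0 < k → k < 1 → ∀ ν : ℝ, -(1/2) ≤ ν → ∀ n : ℕ,
    Set.ncard {x : ℝ | x ∈ Set.Ioo (-J.K k) (J.K k) ∧ W k ν n (x : ℂ) = 0} = n
  exponent_right : ∀ k : ℝ, 0 < k → k < 1 → ∀ ν : ℝ, -(1/2) ≤ ν → ∀ n : ℕ,
    ∃ c : ℂ, c ≠ 0 ∧ Filter.Tendsto
      (fun x : ℝ => W k ν n (x : ℂ) / ((J.K k - x : ℝ) : ℂ) ^ ((ν : ℂ) + 1))
      (nhdsWithin (J.K k) (Set.Iio (J.K k))) (nhds c)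
  exponent_left : ∀ k : ℝ, 0 < k → k < 1 → ∀ ν : ℝ, -(1/2) ≤ ν → ∀ n : ℕ,
    ∃ c : ℂ, c ≠ 0 ∧ Filter.Tendsto
      (fun x : ℝ => W k ν n (x : ℂ) / ((x + J.K k : ℝ) : ℂ) ^ ((ν : ℂ) + 1))
      (nhdsWithin (-J.K k) (Set.Ioi (-J.K k))) (nhds c)
  parity : ∀ k : ℝ, 0 < k → k < 1 → ∀ ν : ℝ, -(1/2) ≤ ν → ∀ n : ℕ,
    ∀ z ∈ J.lwDomain k, W k ν n (-z) = (-1) ^ n * W k ν n z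

/-- The degree `ν = |m| - 1/2` associated with the azimuthal index `m ∈ ℤ`. -/
def nuIdx (m : ℤ) : ℝ := (m.natAbs : ℝ) - 1/2

namespace LameWangerin

variable {J : JacobiData} (L : LameWangerin J)

/-- The internal bi-cyclide harmonic of the first kind `G_{m,n}` expressed in bi-cyclide
coordinates: `R^{-1/2} W^n_{|m|-1/2}(s,k) W^n_{|m|-1/2}(it-K-iK',k) e^{imφ}`. -/
def Gval (k : ℝ) (m : ℤ) (n : ℕ) (s t φ : ℝ) : ℂ :=
  ((J.RR k s t ^ (-(1/2) : ℝ) : ℝ) : ℂ) * L.W k (nuIdx m) n (s : ℂ) *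
    L.W k (nuIdx m) n (Complex.I * (t : ℂ) - (J.K k : ℂ) - Complex.I * (J.Kc k : ℂ)) *
    Complex.exp ((m : ℂ) * Complex.I * (φ : ℂ))

/-- The external bi-cyclide harmonic of the first kind `H_{m,n}` expressed in bi-cyclide
coordinates: `R^{-1/2} W^n_{|m|-1/2}(s,k) W^n_{|m|-1/2}(-it-K-iK',k) e^{imφ}`. -/
def Hval (k : ℝ) (m : ℤ) (n : ℕ) (s t φ : ℝ) : ℂ :=
  ((J.RR k s t ^ (-(1/2) : ℝ) : ℝ) : ℂ) * L.W k (nuIdx m) n (s : ℂ) *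
    L.W k (nuIdx m) n (-Complex.I * (t : ℂ) - (J.K k : ℂ) - Complex.I * (J.Kc k : ℂ)) *
    Complex.exp ((m : ℂ) * Complex.I * (φ : ℂ))

/-- The (constant) Wronskian `w_{m,n} = U(t)V'(t) - U'(t)V(t)` of
`U(t) = W^n_{|m|-1/2}(it-K-iK',k)` and `V(t) = U(-t)`, evaluated at `t = 0`,
where it equals `-2 U(0) U'(0) = -2i W(-K-iK') W'(-K-iK')`. -/
def wronsk1 (k : ℝ) (m : ℤ) (n : ℕ) : ℂ :=
  -2 * Complex.I * L.W k (nuIdx m) n (-(J.K k : ℂ) - Complex.I * (J.Kc k : ℂ)) *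
    L.Wd k (nuIdx m) n (-(J.K k : ℂ) - Complex.I * (J.Kc k : ℂ))

/-- The internal bi-cyclide harmonic of the second kind expressed in bi-cyclide
coordinates: `R^{-1/2} W^n_{|m|-1/2}(-is-K'-iK,k') W^n_{|m|-1/2}(t,k') e^{imφ}`. -/
def G2val (k : ℝ) (m : ℤ) (n : ℕ) (s t φ : ℝ) : ℂ :=
  ((J.RR k s t ^ (-(1/2) : ℝ) : ℝ) : ℂ) *
    L.W (complMod k) (nuIdx m) n
      (-Complex.I * (s : ℂ) - (J.Kc k : ℂ) - Complex.I * (J.K k : ℂ)) *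
    L.W (complMod k) (nuIdx m) n (t : ℂ) * Complex.exp ((m : ℂ) * Complex.I * (φ : ℂ))

/-- The external bi-cyclide harmonic of the second kind expressed in bi-cyclide
coordinates: `R^{-1/2} W^n_{|m|-1/2}(is-K'-iK,k') W^n_{|m|-1/2}(t,k') e^{imφ}`. -/
def H2val (k : ℝ) (m : ℤ) (n : ℕ) (s t φ : ℝ) : ℂ :=
  ((J.RR k s t ^ (-(1/2) : ℝ) : ℝ) : ℂ) *
    L.W (complMod k) (nuIdx m) n
      (Complex.I * (s : ℂ) - (J.Kc k : ℂ) - Complex.I * (J.K k : ℂ)) *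
    L.W (complMod k) (nuIdx m) n (t : ℂ) * Complex.exp ((m : ℂ) * Complex.I * (φ : ℂ))

/-- The (constant) Wronskian `w_{m,n} = U(s)V'(s) - U'(s)V(s)` of
`U(s) = W^n_{|m|-1/2}(is-K'-iK,k')` and `V(s) = U(-s)`, evaluated at `s = 0`. -/
def wronsk2 (k : ℝ) (m : ℤ) (n : ℕ) : ℂ :=
  -2 * Complex.I *
    L.W (complMod k) (nuIdx m) n (-(J.Kc k : ℂ) - Complex.I * (J.K k : ℂ)) *
    L.Wd (complMod k) (nuIdx m) n (-(J.Kc k : ℂ) - Complex.I * (J.K k : ℂ))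

end LameWangerin

/-- `b = (1-k)/k' = k'/(1+k) ∈ (0,1)`. -/
def bParam (k : ℝ) : ℝ := (1 - k) / complMod k

/-- The exceptional segment `{(0,0,z) : -1/b ≤ z ≤ -b}` of the internal harmonics
of the first kind. -/
def segG (k : ℝ) : Set E3 :=
  {p : E3 | p 0 = 0 ∧ p 1 = 0 ∧ -(bParam k)⁻¹ ≤ p 2 ∧ p 2 ≤ -bParam k}

/-- The exceptional segment `{(0,0,z) : b ≤ z ≤ 1/b}` of the external harmonics
of the first kind. -/
def segH (k : ℝ) : Set E3 :=
  {p : E3 | p 0 = 0 ∧ p 1 = 0 ∧ bParam k ≤ p 2 ∧ p 2 ≤ (bParam k)⁻¹}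

/-- The exceptional set `{(0,0,z) : |z| ≥ 1/b}` of the internal harmonics
of the second kind. -/
def segG2 (k : ℝ) : Set E3 :=
  {p : E3 | p 0 = 0 ∧ p 1 = 0 ∧ (bParam k)⁻¹ ≤ |p 2|}

/-- The quantity `χ(s,t,s*,t*,k)` of the addition theorem. -/
def JacobiData.chiB (J : JacobiData) (k s t s' t' : ℝ) : ℝ :=
  J.ncr k s * J.ncr (complMod k) t * J.ncr k s' * J.ncr (complMod k) t' -
    J.dcr k s * J.scr (complMod k) t * J.dcr k s' * J.scr (complMod k) t' -
    J.scr k s * J.dcr (complMod k) t * J.scr k s' * J.dcr (complMod k) t'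

/-- The polynomial `P₁(x,y,z)` whose zero set (in `z > 0`) is the coordinate surface
`t = t₀`. -/
def JacobiData.P1 (J : JacobiData) (k t₀ : ℝ) (p : E3) : ℝ :=
  (J.snr (complMod k) t₀) ^ 2 * (p 0 ^ 2 + p 1 ^ 2 + p 2 ^ 2 + 1) ^ 2 -
    k ^ 2 * (J.snr (complMod k) t₀ / J.dnr (complMod k) t₀) ^ 2 *
      (p 0 ^ 2 + p 1 ^ 2 + p 2 ^ 2 - 1) ^ 2 - 4 * p 2 ^ 2

/-- The bounded domain `D₁` interior to the coordinate surface `t = t₀`, given in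
Cartesian coordinates by `P₁ < 0`, `z > 0` and in bi-cyclide coordinates by
`t ∈ (t₀, K']`. -/
def JacobiData.D1 (J : JacobiData) (k t₀ : ℝ) : Set E3 :=
  {p : E3 | J.P1 k t₀ p < 0 ∧ 0 < p 2}

/-- The Legendre function of the second kind `Q_ν(x)` for `x > 1` (Heine's integral
representation). -/
def legendreQ (ν : ℝ) (x : ℝ) : ℝ :=
  ∫ t in Set.Ioi (0 : ℝ), (x + Real.sqrt (x ^ 2 - 1) * Real.cosh t) ^ (-ν - 1)

/-- The Legendre polynomial `P_ℓ(x)` (Rodrigues' formula). -/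
def legendreP (ℓ : ℕ) (x : ℝ) : ℝ :=
  (1 / (2 ^ ℓ * (Nat.factorial ℓ : ℝ))) * deriv^[ℓ] (fun y : ℝ => (y ^ 2 - 1) ^ ℓ) x

/-- The Ferrers function of the first kind `𝖯^m_ℓ(x)`, `-1 < x < 1`. -/
def ferrersP (ℓ m : ℕ) (x : ℝ) : ℝ :=
  (1 - x ^ 2) ^ ((m : ℝ) / 2) * deriv^[m] (legendreP ℓ) x

/-- The associated Legendre function of the first kind `P^m_ℓ(x)`, `x > 1`. -/
def assocP (ℓ m : ℕ) (x : ℝ) : ℝ :=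
  (x ^ 2 - 1) ^ ((m : ℝ) / 2) * deriv^[m] (legendreP ℓ) x

/-- The associated Legendre function of the second kind `Q^m_ℓ(x)`, `x > 1`. -/
def assocQ (ℓ m : ℕ) (x : ℝ) : ℝ :=
  (x ^ 2 - 1) ^ ((m : ℝ) / 2) * deriv^[m] (legendreQ (ℓ : ℝ)) x

/-- The associated Legendre function of the second kind `Q^μ_λ(z)` of general real order
`μ` and degree `λ`, for complex argument `z` off the cut `(-∞, 1]`, via the integral
representation `Q^μ_λ(z) = e^{iμπ} (Γ(λ+1)/Γ(λ-μ+1)) ∫_0^∞ cosh(μt) (z + √(z²-1) cosh t)^{-λ-1} dt`. -/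
def legendreQC (μ lam : ℝ) (z : ℂ) : ℂ :=
  Complex.exp ((μ : ℂ) * (Real.pi : ℂ) * Complex.I) *
    (Complex.Gamma ((lam : ℂ) + 1) / Complex.Gamma ((lam : ℂ) - (μ : ℂ) + 1)) *
    ∫ t in Set.Ioi (0 : ℝ), ((Real.cosh (μ * t) : ℝ) : ℂ) *
      (z + (z - 1) ^ ((1 : ℂ) / 2) * (z + 1) ^ ((1 : ℂ) / 2) * ((Real.cosh t : ℝ) : ℂ)) ^
        (-(lam : ℂ) - 1)


/-
Inversion at the unit sphere only flips the sign of `sn(s,k)` in the formulas for `R` and `z`,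
and `‖r‖² = (1 + sn s · dn t)/(1 - sn s · dn t)`; since `sn` is odd and `cn`, `dn` are even, the
inverted point has bi-cyclide coordinates `(-s, t, φ)` and `R(-s,t) = R(s,t)/‖r‖²`. Bi-cyclide
coordinates are unique, so the Kelvin transform of `G_{m,n}` trades the factor `‖r‖⁻¹` against
the factor `‖r‖` coming from `R^{-1/2}`, and the parity `W(-s) = (-1)ⁿ W(s)` gives the sign.
-/

lemma complMod_sq {k : ℝ} (hk : k ^ 2 ≤ 1) : complMod k ^ 2 = 1 - k ^ 2 :=
  Real.sq_sqrt (by linarith)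

lemma complMod_mem_Ioo {k : ℝ} (hk0 : 0 < k) (hk1 : k < 1) : complMod k ∈ Ioo 0 1 :=
  ⟨Real.sqrt_pos.mpr (by nlinarith), (Real.sqrt_lt' one_pos).mpr (by nlinarith)⟩

lemma eq_of_add_eq_of_mul_eq_of_lt {x y x' y' : ℝ} (hadd : x + y = x' + y')
    (hmul : x * y = x' * y') (hlt : x < y') : x = x' := by
  have : (x - x') * (x - y') = 0 := by linear_combination x * hadd - hmul
  rcases mul_eq_zero.mp this with h | h <;> linarith

lemma rpow_neg_half_div_sq {x y : ℝ} (hx : 0 ≤ x) (hy : 0 ≤ y) :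
    (x / y ^ 2) ^ (-(1 / 2) : ℝ) = y * x ^ (-(1 / 2) : ℝ) := by
  rw [Real.div_rpow hx (sq_nonneg y), div_eq_mul_inv, mul_comm, ← Real.rpow_neg (sq_nonneg y),
    neg_neg, ← Real.sqrt_eq_rpow, Real.sqrt_sq hy]

lemma mem_closedBall_one_of_abs_le_one {a b c : ℝ} (ha : |a| ≤ 1) (hb : |b| ≤ 1)
    (hc : |c| ≤ 1) : (a, b, c) ∈ Metric.closedBall (0 : ℝ × ℝ × ℝ) 1 := by
  simp [Prod.norm_def, ha, hb, hc]

namespace JacobiData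

variable (J : JacobiData) {k : ℝ}

lemma Kc_pos (hk0 : 0 < k) (hk1 : k < 1) : 0 < J.Kc k :=
  J.K_pos _ (complMod_mem_Ioo hk0 hk1).1 (complMod_mem_Ioo hk0 hk1).2

lemma abs_im_ofReal_lt_Kc (hk0 : 0 < k) (hk1 : k < 1) (x : ℝ) :
    |(x : ℂ).im| < J.K (complMod k) := by
  simpa [Kc] using J.Kc_pos hk0 hk1

lemma ofReal_mem_lwDomain (hk0 : 0 < k) (hk1 : k < 1) {s : ℝ}
    (hs : s ∈ Ioo (-J.K k) (J.K k)) : (s : ℂ) ∈ J.lwDomain k :=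
  ⟨by simpa using J.Kc_pos hk0 hk1, Or.inr (by simpa [abs_lt] using hs)⟩

lemma hasDerivAt_snr (hk0 : 0 < k) (hk1 : k < 1) (x : ℝ) :
    HasDerivAt (J.snr k) (J.cnr k x * J.dnr k x) x := by
  refine (J.sn_hasDerivAt k hk0 hk1 x
    (J.abs_im_ofReal_lt_Kc hk0 hk1 x)).real_of_complex.congr_deriv ?_
  simp [cnr, dnr, Complex.mul_re, J.cn_real k hk0 hk1 x]

lemma hasDerivAt_cnr (hk0 : 0 < k) (hk1 : k < 1) (x : ℝ) :
    HasDerivAt (J.cnr k) (-J.snr k x * J.dnr k x) x := by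
  refine (J.cn_hasDerivAt k hk0 hk1 x
    (J.abs_im_ofReal_lt_Kc hk0 hk1 x)).real_of_complex.congr_deriv ?_
  simp [snr, dnr, Complex.mul_re, J.sn_real k hk0 hk1 x]

lemma hasDerivAt_dnr (hk0 : 0 < k) (hk1 : k < 1) (x : ℝ) :
    HasDerivAt (J.dnr k) (-k ^ 2 * J.snr k x * J.cnr k x) x := by
  refine (J.dn_hasDerivAt k hk0 hk1 x
    (J.abs_im_ofReal_lt_Kc hk0 hk1 x)).real_of_complex.congr_deriv ?_
  simp [snr, cnr, Complex.mul_re, J.sn_real k hk0 hk1 x, J.cn_real k hk0 hk1 x,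
    ← Complex.ofReal_pow]

lemma snr_zero : J.snr k 0 = 0 := by simp [snr, J.sn_zero]

lemma cnr_zero : J.cnr k 0 = 1 := by simp [cnr, J.cn_zero]

lemma dnr_zero : J.dnr k 0 = 1 := by simp [dnr, J.dn_zero]

lemma snr_sq_add_cnr_sq (hk0 : 0 < k) (hk1 : k < 1) (x : ℝ) :
    J.snr k x ^ 2 + J.cnr k x ^ 2 = 1 := by
  have hderiv (y : ℝ) : HasDerivAt (fun y => J.snr k y ^ 2 + J.cnr k y ^ 2) 0 y :=
    (((J.hasDerivAt_snr hk0 hk1 y).pow 2).add ((J.hasDerivAt_cnr hk0 hk1 y).pow 2)).congr_deriv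
      (by ring)
  simpa [J.snr_zero, J.cnr_zero] using is_const_of_deriv_eq_zero
    (fun y => (hderiv y).differentiableAt) (fun y => (hderiv y).deriv) x 0

lemma dnr_sq_add_sq_mul_snr_sq (hk0 : 0 < k) (hk1 : k < 1) (x : ℝ) :
    J.dnr k x ^ 2 + k ^ 2 * J.snr k x ^ 2 = 1 := by
  have hderiv (y : ℝ) : HasDerivAt (fun y => J.dnr k y ^ 2 + k ^ 2 * J.snr k y ^ 2) 0 y :=
    (((J.hasDerivAt_dnr hk0 hk1 y).pow 2).add
      (((J.hasDerivAt_snr hk0 hk1 y).pow 2).const_mul (k ^ 2))).congr_deriv (by ring)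
  simpa [J.snr_zero, J.dnr_zero] using is_const_of_deriv_eq_zero
    (fun y => (hderiv y).differentiableAt) (fun y => (hderiv y).deriv) x 0

lemma abs_snr_le_one (hk0 : 0 < k) (hk1 : k < 1) (x : ℝ) : |J.snr k x| ≤ 1 :=
  (sq_le_one_iff_abs_le_one _).mp (by nlinarith [J.snr_sq_add_cnr_sq hk0 hk1 x])

lemma abs_cnr_le_one (hk0 : 0 < k) (hk1 : k < 1) (x : ℝ) : |J.cnr k x| ≤ 1 :=
  (sq_le_one_iff_abs_le_one _).mp (by nlinarith [J.snr_sq_add_cnr_sq hk0 hk1 x])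

lemma abs_dnr_le_one (hk0 : 0 < k) (hk1 : k < 1) (x : ℝ) : |J.dnr k x| ≤ 1 :=
  (sq_le_one_iff_abs_le_one _).mp
    (by nlinarith [J.dnr_sq_add_sq_mul_snr_sq hk0 hk1 x, sq_nonneg (k * J.snr k x)])

/-- `(sn, cn, dn)` and `x ↦ (-sn(-x), cn(-x), dn(-x))` solve the same initial value problem,
whose right-hand side is Lipschitz on the cube `[-1, 1]³` containing both solutions. -/
lemma snr_neg_and_cnr_neg_and_dnr_neg (hk0 : 0 < k) (hk1 : k < 1) (x : ℝ) :
    J.snr k (-x) = -J.snr k x ∧ J.cnr k (-x) = J.cnr k x ∧ J.dnr k (-x) = J.dnr k x := by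
  let v : ℝ × ℝ × ℝ → ℝ × ℝ × ℝ := fun p => (p.2.1 * p.2.2, -p.1 * p.2.2, -k ^ 2 * p.1 * p.2.1)
  obtain ⟨C, hC⟩ : ∃ C, LipschitzOnWith C v (Metric.closedBall 0 1) :=
    (show ContDiff ℝ 1 v by fun_prop).contDiffOn.exists_lipschitzOnWith one_ne_zero
      (convex_closedBall 0 1) (isCompact_closedBall 0 1)
  have hsol (y : ℝ) : HasDerivAt (fun y => (J.snr k y, J.cnr k y, J.dnr k y))
      (v (J.snr k y, J.cnr k y, J.dnr k y)) y :=
    (J.hasDerivAt_snr hk0 hk1 y).prodMk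
      ((J.hasDerivAt_cnr hk0 hk1 y).prodMk (J.hasDerivAt_dnr hk0 hk1 y))
  have hrefl (y : ℝ) : HasDerivAt (fun y => (-J.snr k (-y), J.cnr k (-y), J.dnr k (-y)))
      (v (-J.snr k (-y), J.cnr k (-y), J.dnr k (-y))) y := by
    have hs := ((J.hasDerivAt_snr hk0 hk1 (-y)).comp y (hasDerivAt_neg y)).neg
    have hc := (J.hasDerivAt_cnr hk0 hk1 (-y)).comp y (hasDerivAt_neg y)
    have hd := (J.hasDerivAt_dnr hk0 hk1 (-y)).comp y (hasDerivAt_neg y)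
    refine (hs.prodMk (hc.prodMk hd)).congr_deriv ?_
    simp only [v, Prod.mk.injEq]
    refine ⟨?_, ?_, ?_⟩ <;> ring
  have hball (y : ℝ) (σ : ℝ) (hσ : |σ| = 1) :
      (σ * J.snr k y, J.cnr k y, J.dnr k y) ∈ Metric.closedBall (0 : ℝ × ℝ × ℝ) 1 :=
    mem_closedBall_one_of_abs_le_one
      (by rw [abs_mul, hσ, one_mul]; exact J.abs_snr_le_one hk0 hk1 y)
      (J.abs_cnr_le_one hk0 hk1 y) (J.abs_dnr_le_one hk0 hk1 y)
  have heq := congr_fun (ODE_solution_unique_univ (v := fun _ => v)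
    (s := fun _ => Metric.closedBall 0 1) (t₀ := 0) (fun _ => hC)
    (fun y => ⟨hsol y, by simpa using hball y 1 abs_one⟩)
    (fun y => ⟨hrefl y, by simpa using hball (-y) (-1) (by simp)⟩)
    (by simp [J.snr_zero, J.cnr_zero, J.dnr_zero])) x
  simp only [Prod.mk.injEq] at heq
  exact ⟨by linarith [heq.1], heq.2.1.symm, heq.2.2.symm⟩

lemma snr_neg (hk0 : 0 < k) (hk1 : k < 1) (x : ℝ) : J.snr k (-x) = -J.snr k x :=
  (J.snr_neg_and_cnr_neg_and_dnr_neg hk0 hk1 x).1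

lemma cnr_neg (hk0 : 0 < k) (hk1 : k < 1) (x : ℝ) : J.cnr k (-x) = J.cnr k x :=
  (J.snr_neg_and_cnr_neg_and_dnr_neg hk0 hk1 x).2.1

lemma dnr_neg (hk0 : 0 < k) (hk1 : k < 1) (x : ℝ) : J.dnr k (-x) = J.dnr k x :=
  (J.snr_neg_and_cnr_neg_and_dnr_neg hk0 hk1 x).2.2

lemma cnr_pos (hk0 : 0 < k) (hk1 : k < 1) {x : ℝ} (hx : x ∈ Ioo (-J.K k) (J.K k)) :
    0 < J.cnr k x := by
  rcases le_or_gt 0 x with h | h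
  · exact J.cn_pos k hk0 hk1 x h hx.2
  · rw [← neg_neg x, J.cnr_neg hk0 hk1]
    exact J.cn_pos k hk0 hk1 (-x) (by linarith) (by linarith [hx.1])

/-- `dn` has no real zeros since `dn² = 1 - k² sn² ≥ 1 - k²`, so it keeps the sign of
`dn 0 = 1`. -/
lemma dnr_pos (hk0 : 0 < k) (hk1 : k < 1) (x : ℝ) : 0 < J.dnr k x := by
  have hne (y : ℝ) : J.dnr k y ≠ 0 := by
    intro h0
    have := J.dnr_sq_add_sq_mul_snr_sq hk0 hk1 y
    have := (sq_le_one_iff_abs_le_one _).mpr (J.abs_snr_le_one hk0 hk1 y)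
    rw [h0] at *
    nlinarith
  by_contra! hle
  have hcont : Continuous (J.dnr k) :=
    continuous_iff_continuousAt.mpr fun y => (J.hasDerivAt_dnr hk0 hk1 y).continuousAt
  obtain ⟨y, hy⟩ := intermediate_value_univ x 0 hcont ⟨hle, by rw [J.dnr_zero]; exact zero_le_one⟩
  exact hne y hy

lemma snr_strictMonoOn (hk0 : 0 < k) (hk1 : k < 1) :
    StrictMonoOn (J.snr k) (Icc (-J.K k) (J.K k)) := by
  refine strictMonoOn_of_deriv_pos (convex_Icc _ _)
    (HasDerivAt.continuousOn fun y _ => J.hasDerivAt_snr hk0 hk1 y) fun x hx => ?_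
  rw [interior_Icc] at hx
  rw [(J.hasDerivAt_snr hk0 hk1 x).deriv]
  exact mul_pos (J.cnr_pos hk0 hk1 hx) (J.dnr_pos hk0 hk1 x)

lemma snr_sq_lt_one (hk0 : 0 < k) (hk1 : k < 1) {x : ℝ} (hx : x ∈ Ioo (-J.K k) (J.K k)) :
    J.snr k x ^ 2 < 1 := by
  nlinarith [J.snr_sq_add_cnr_sq hk0 hk1 x, J.cnr_pos hk0 hk1 hx]

lemma abs_snr_mul_dnr_lt_one (hk0 : 0 < k) (hk1 : k < 1) {s : ℝ}
    (hs : s ∈ Ioo (-J.K k) (J.K k)) (t : ℝ) : |J.snr k s * J.dnr (complMod k) t| < 1 := by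
  obtain ⟨hκ0, hκ1⟩ := complMod_mem_Ioo hk0 hk1
  rw [abs_mul]
  calc |J.snr k s| * |J.dnr (complMod k) t| ≤ |J.snr k s| :=
        mul_le_of_le_one_right (abs_nonneg _) (J.abs_dnr_le_one hκ0 hκ1 t)
    _ < 1 := (sq_lt_one_iff_abs_lt_one _).mp (J.snr_sq_lt_one hk0 hk1 hs)

lemma cnr_mul_cnr_sq_add_dnr_mul_snr_sq (hk0 : 0 < k) (hk1 : k < 1) (s t : ℝ) :
    (J.cnr k s * J.cnr (complMod k) t) ^ 2 + (J.dnr k s * J.snr (complMod k) t) ^ 2 =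
      1 - (J.snr k s * J.dnr (complMod k) t) ^ 2 := by
  obtain ⟨hκ0, hκ1⟩ := complMod_mem_Ioo hk0 hk1
  linear_combination (J.cnr (complMod k) t ^ 2) * J.snr_sq_add_cnr_sq hk0 hk1 s +
    (1 - J.snr k s ^ 2) * J.snr_sq_add_cnr_sq hκ0 hκ1 t +
    J.snr (complMod k) t ^ 2 * J.dnr_sq_add_sq_mul_snr_sq hk0 hk1 s +
    J.snr k s ^ 2 * J.dnr_sq_add_sq_mul_snr_sq hκ0 hκ1 t +
    -J.snr k s ^ 2 * J.snr (complMod k) t ^ 2 * complMod_sq (k := k) (by nlinarith)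

lemma sq_mul_snr_sq_add_dnr_sq (hk0 : 0 < k) (hk1 : k < 1) (s t : ℝ) :
    k ^ 2 * J.snr k s ^ 2 + J.dnr (complMod k) t ^ 2 =
      1 + k ^ 2 * (J.snr k s * J.dnr (complMod k) t) ^ 2 -
        complMod k ^ 2 * (J.dnr k s * J.snr (complMod k) t) ^ 2 := by
  obtain ⟨hκ0, hκ1⟩ := complMod_mem_Ioo hk0 hk1
  linear_combination (complMod k ^ 2 * J.snr (complMod k) t ^ 2) *
      J.dnr_sq_add_sq_mul_snr_sq hk0 hk1 s +
    (1 - k ^ 2 * J.snr k s ^ 2) * J.dnr_sq_add_sq_mul_snr_sq hκ0 hκ1 t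

lemma sq_lt_dnr_sq (hk0 : 0 < k) (hk1 : k < 1) {t : ℝ} (ht : t ∈ Ioo (-J.Kc k) (J.Kc k)) :
    k ^ 2 < J.dnr (complMod k) t ^ 2 := by
  obtain ⟨hκ0, hκ1⟩ := complMod_mem_Ioo hk0 hk1
  have hκ := complMod_sq (k := k) (by nlinarith)
  nlinarith [J.dnr_sq_add_sq_mul_snr_sq hκ0 hκ1 t, J.snr_sq_lt_one hκ0 hκ1 ht,
    mul_pos hκ0 hκ0]

lemma RR_sq_add_ZZ_sq (hk0 : 0 < k) (hk1 : k < 1) {s t : ℝ}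
    (hst : J.snr k s * J.dnr (complMod k) t ≠ 1) :
    J.RR k s t ^ 2 + J.ZZ k s t ^ 2 =
      (1 + J.snr k s * J.dnr (complMod k) t) / (1 - J.snr k s * J.dnr (complMod k) t) := by
  have hden : 1 - J.snr k s * J.dnr (complMod k) t ≠ 0 := sub_ne_zero.mpr hst.symm
  rw [RR, ZZ, div_pow, div_pow, ← add_div, J.cnr_mul_cnr_sq_add_dnr_mul_snr_sq hk0 hk1,
    div_eq_div_iff (pow_ne_zero 2 hden) hden]
  ring

end JacobiData

namespace JacobiData.IsBicyclide

variable {J : JacobiData} {k : ℝ} {p : E3} {s t φ : ℝ}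

lemma RR_pos (hk0 : 0 < k) (hk1 : k < 1) (h : J.IsBicyclide k p s t φ) : 0 < J.RR k s t :=
  div_pos (mul_pos (J.cnr_pos hk0 hk1 h.1) (J.cnr_pos (complMod_mem_Ioo hk0 hk1).1
    (complMod_mem_Ioo hk0 hk1).2 h.2.1))
    (by linarith [abs_lt.mp (J.abs_snr_mul_dnr_lt_one hk0 hk1 h.1 t)])

lemma norm_sq_eq (hk0 : 0 < k) (hk1 : k < 1) (h : J.IsBicyclide k p s t φ) :
    ‖p‖ ^ 2 =
      (1 + J.snr k s * J.dnr (complMod k) t) / (1 - J.snr k s * J.dnr (complMod k) t) := by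
  obtain ⟨hs, -, -, h0, h1, h2⟩ := h
  rw [← J.RR_sq_add_ZZ_sq hk0 hk1 (abs_lt.mp (J.abs_snr_mul_dnr_lt_one hk0 hk1 hs t)).2.ne,
    EuclideanSpace.real_norm_sq_eq, Fin.sum_univ_three, h0, h1, h2]
  linear_combination J.RR k s t ^ 2 * Real.cos_sq_add_sin_sq φ

lemma snr_mul_dnr_eq (hk0 : 0 < k) (hk1 : k < 1) (h : J.IsBicyclide k p s t φ) :
    J.snr k s * J.dnr (complMod k) t = (‖p‖ ^ 2 - 1) / (‖p‖ ^ 2 + 1) := by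
  have hu := abs_lt.mp (J.abs_snr_mul_dnr_lt_one hk0 hk1 h.1 t)
  rw [h.norm_sq_eq hk0 hk1]
  field_simp [show 1 - J.snr k s * J.dnr (complMod k) t ≠ 0 by linarith]
  ring

lemma dnr_mul_snr_eq (hk0 : 0 < k) (hk1 : k < 1) (h : J.IsBicyclide k p s t φ) :
    J.dnr k s * J.snr (complMod k) t = p 2 * (1 - J.snr k s * J.dnr (complMod k) t) := by
  have hu := abs_lt.mp (J.abs_snr_mul_dnr_lt_one hk0 hk1 h.1 t)
  rw [h.2.2.2.2.2, ZZ, div_mul_cancel₀ _ (by linarith)]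

lemma norm_pos (hk0 : 0 < k) (hk1 : k < 1) (h : J.IsBicyclide k p s t φ) : 0 < ‖p‖ := by
  have hu := abs_lt.mp (J.abs_snr_mul_dnr_lt_one hk0 hk1 h.1 t)
  have hsq : 0 < ‖p‖ ^ 2 := by
    rw [h.norm_sq_eq hk0 hk1]
    exact div_pos (by linarith) (by linarith)
  nlinarith [norm_nonneg p]

lemma RR_neg (hk0 : 0 < k) (hk1 : k < 1) (h : J.IsBicyclide k p s t φ) :
    J.RR k (-s) t = J.RR k s t / ‖p‖ ^ 2 := by
  have hu := abs_lt.mp (J.abs_snr_mul_dnr_lt_one hk0 hk1 h.1 t)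
  rw [h.norm_sq_eq hk0 hk1, RR, RR, J.snr_neg hk0 hk1, J.cnr_neg hk0 hk1]
  field_simp [show 1 - J.snr k s * J.dnr (complMod k) t ≠ 0 by linarith,
    show 1 + J.snr k s * J.dnr (complMod k) t ≠ 0 by linarith]
  ring

lemma ZZ_neg (hk0 : 0 < k) (hk1 : k < 1) (h : J.IsBicyclide k p s t φ) :
    J.ZZ k (-s) t = J.ZZ k s t / ‖p‖ ^ 2 := by
  have hu := abs_lt.mp (J.abs_snr_mul_dnr_lt_one hk0 hk1 h.1 t)
  rw [h.norm_sq_eq hk0 hk1, ZZ, ZZ, J.snr_neg hk0 hk1, J.dnr_neg hk0 hk1]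
  field_simp [show 1 - J.snr k s * J.dnr (complMod k) t ≠ 0 by linarith,
    show 1 + J.snr k s * J.dnr (complMod k) t ≠ 0 by linarith]
  ring

lemma inv (hk0 : 0 < k) (hk1 : k < 1) (h : J.IsBicyclide k p s t φ) :
    J.IsBicyclide k ((‖p‖ ^ 2)⁻¹ • p) (-s) t φ := by
  have hR := h.RR_neg hk0 hk1
  have hZ := h.ZZ_neg hk0 hk1
  obtain ⟨hs, ht, hφ, h0, h1, h2⟩ := h
  refine ⟨⟨by linarith [hs.2], by linarith [hs.1]⟩, ht, hφ, ?_, ?_, ?_⟩ <;>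
    simp only [PiLp.smul_apply, smul_eq_mul, h0, h1, h2, hR, hZ] <;> ring

variable {s' t' φ' : ℝ}

/-- `u = sn s · dn t` is fixed by `‖p‖`, and `dn s · sn t` then by `z`, so the sum and the
product of `k² sn² s` and `dn² t` are fixed by `p`: they are the two roots of a quadratic, told
apart by `k² sn² s < k² < dn² t`. -/
lemma snr_eq (hk0 : 0 < k) (hk1 : k < 1) (h : J.IsBicyclide k p s t φ)
    (h' : J.IsBicyclide k p s' t' φ') : J.snr k s = J.snr k s' := by
  obtain ⟨hκ0, hκ1⟩ := complMod_mem_Ioo hk0 hk1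
  have hu : J.snr k s * J.dnr (complMod k) t = J.snr k s' * J.dnr (complMod k) t' := by
    rw [h.snr_mul_dnr_eq hk0 hk1, h'.snr_mul_dnr_eq hk0 hk1]
  have hz : J.dnr k s * J.snr (complMod k) t = J.dnr k s' * J.snr (complMod k) t' := by
    rw [h.dnr_mul_snr_eq hk0 hk1, h'.dnr_mul_snr_eq hk0 hk1, hu]
  have hsum : k ^ 2 * J.snr k s ^ 2 + J.dnr (complMod k) t ^ 2 =
      k ^ 2 * J.snr k s' ^ 2 + J.dnr (complMod k) t' ^ 2 := by
    rw [J.sq_mul_snr_sq_add_dnr_sq hk0 hk1, J.sq_mul_snr_sq_add_dnr_sq hk0 hk1, hu, hz]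
  have hroot : k ^ 2 * J.snr k s ^ 2 = k ^ 2 * J.snr k s' ^ 2 := by
    refine eq_of_add_eq_of_mul_eq_of_lt hsum ?_ ?_
    · linear_combination (k ^ 2 * (J.snr k s * J.dnr (complMod k) t +
        J.snr k s' * J.dnr (complMod k) t')) * hu
    nlinarith [J.snr_sq_lt_one hk0 hk1 h.1, J.sq_lt_dnr_sq hk0 hk1 h'.2.1, pow_pos hk0 2]
  have hdn : J.dnr (complMod k) t = J.dnr (complMod k) t' :=
    (sq_eq_sq₀ (J.dnr_pos hκ0 hκ1 t).le (J.dnr_pos hκ0 hκ1 t').le).mp (by linarith)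
  rw [hdn] at hu
  exact mul_right_cancel₀ (J.dnr_pos hκ0 hκ1 t').ne' hu

lemma fst_eq (hk0 : 0 < k) (hk1 : k < 1) (h : J.IsBicyclide k p s t φ)
    (h' : J.IsBicyclide k p s' t' φ') : s = s' :=
  (J.snr_strictMonoOn hk0 hk1).injOn (Ioo_subset_Icc_self h.1) (Ioo_subset_Icc_self h'.1)
    (h.snr_eq hk0 hk1 h')

lemma snd_eq (hk0 : 0 < k) (hk1 : k < 1) (h : J.IsBicyclide k p s t φ)
    (h' : J.IsBicyclide k p s' t' φ') : t = t' := by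
  obtain ⟨hκ0, hκ1⟩ := complMod_mem_Ioo hk0 hk1
  obtain rfl := h.fst_eq hk0 hk1 h'
  have hz : J.dnr k s * J.snr (complMod k) t = J.dnr k s * J.snr (complMod k) t' := by
    rw [h.dnr_mul_snr_eq hk0 hk1, h'.dnr_mul_snr_eq hk0 hk1, h.snr_mul_dnr_eq hk0 hk1,
      h'.snr_mul_dnr_eq hk0 hk1]
  exact (J.snr_strictMonoOn hκ0 hκ1).injOn (Ioo_subset_Icc_self h.2.1)
    (Ioo_subset_Icc_self h'.2.1) (mul_left_cancel₀ (J.dnr_pos hk0 hk1 s).ne' hz)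

lemma arg_eq (hk0 : 0 < k) (hk1 : k < 1) (h : J.IsBicyclide k p s t φ) :
    Complex.arg (p 0 + p 1 * Complex.I) = φ := by
  rw [h.2.2.2.1, h.2.2.2.2.1]
  convert arg_mul_cos_add_sin_mul_I (h.RR_pos hk0 hk1) h.2.2.1 using 2
  push_cast
  ring

end JacobiData.IsBicyclide

lemma neg_half_le_nuIdx (m : ℤ) : -(1 / 2) ≤ nuIdx m := by
  have : (0 : ℝ) ≤ m.natAbs := Nat.cast_nonneg _
  rw [nuIdx]
  linarith

/-- The Kelvin transform `Ĝ_{m,n}(r) = ‖r‖⁻¹ G_{m,n}(r/‖r‖²)` of the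
internal bi-cyclide harmonic of the first kind satisfies `Ĝ_{m,n} = (-1)^n G_{m,n}`. -/
theorem statement16 (J : JacobiData) (L : LameWangerin J)
    (k : ℝ) (hk0 : 0 < k) (hk1 : k < 1) (m : ℤ) (n : ℕ)
    (r : E3) (s t φ sa ta φa : ℝ)
    (h1 : J.IsBicyclide k r s t φ)
    (h2 : J.IsBicyclide k ((‖r‖ ^ 2)⁻¹ • r) sa ta φa) :
    ((‖r‖ : ℝ) : ℂ)⁻¹ * L.Gval k m n sa ta φa = (-1) ^ n * L.Gval k m n s t φ := by
  have h1' := h1.inv hk0 hk1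
  obtain ⟨rfl, rfl, rfl⟩ : -s = sa ∧ t = ta ∧ φ = φa :=
    ⟨h1'.fst_eq hk0 hk1 h2, h1'.snd_eq hk0 hk1 h2,
      (h1'.arg_eq hk0 hk1).symm.trans (h2.arg_eq hk0 hk1)⟩
  have hR : J.RR k (-s) t ^ (-(1 / 2) : ℝ) = ‖r‖ * J.RR k s t ^ (-(1 / 2) : ℝ) := by
    rw [h1.RR_neg hk0 hk1]
    exact rpow_neg_half_div_sq (h1.RR_pos hk0 hk1).le (norm_nonneg r)
  have hW : L.W k (nuIdx m) n ((-s : ℝ) : ℂ) = (-1) ^ n * L.W k (nuIdx m) n s := by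
    rw [ofReal_neg]
    exact L.parity k hk0 hk1 _ (neg_half_le_nuIdx m) n _ (J.ofReal_mem_lwDomain hk0 hk1 h1.1)
  have hr : ((‖r‖ : ℝ) : ℂ) ≠ 0 := ofReal_ne_zero.mpr (h1.norm_pos hk0 hk1).ne'
  simp only [LameWangerin.Gval, hR, hW, ofReal_mul]
  field_simp

end
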